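/- arXiv:2509.02279 — 3 statements merged into one kernel-verified Lean document; each statement's English description precedes it below -/
import Mathlib

section
/- Let J* be the joint distribution of (p(x), y*) for a predictor p : X → [0,1] over a finite set X and distribution D* on X × {0,1}. Then the upper and lower distances to calibration satisfy dCE_upper(J*) ≤ 4·sqrt(dCE_lower(J*)); that is, for every realization (X', D', p') of J*, dCE(p', D') ≤ 4·sqrt(dCE_lower(J*)). -/
open scoped Classical
open Finset Set

noncomputable section

/-- `D` is a probability distribution on `X × {0,1}` (labels as `Bool`). -/
def IsDistribution {X : Type} [Fintype X] (D : X × Bool → ℝ) : Prop :=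
  (∀ z, 0 ≤ D z) ∧ (∑ z : X × Bool, D z) = 1

/-- A predictor takes values in `[0,1]`. -/
def IsPredictor {X : Type} (p : X → ℝ) : Prop := ∀ x, p x ∈ Set.Icc (0 : ℝ) 1

/-- Numerical value of a Boolean label. -/
def yval (y : Bool) : ℝ := if y then 1 else 0

/-- Marginal mass of a point `x`. -/
def massx {X : Type} (D : X × Bool → ℝ) (x : X) : ℝ := D (x, false) + D (x, true)

/-- Expectation of `f(x, y)` under `D`. -/
def expval {X : Type} [Fintype X] (D : X × Bool → ℝ) (f : X × Bool → ℝ) : ℝ :=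
  ∑ z : X × Bool, D z * f z

/-- Perfect calibration: for every `v` in the image of `p`,
`E[y | p(x) = v] = v`, stated multiplicatively. -/
def PerfectlyCalibrated {X : Type} [Fintype X] (D : X × Bool → ℝ) (p : X → ℝ) : Prop :=
  ∀ v ∈ Set.range p,
    (∑ x : X, if p x = v then D (x, true) else 0) =
      v * (∑ x : X, if p x = v then massx D x else 0)

/-- The expected `ℓ1` distance `d(p1, p2) = E|p1(x) - p2(x)|` between predictors. -/
def distp {X : Type} [Fintype X] (D : X × Bool → ℝ) (p1 p2 : X → ℝ) : ℝ :=
  ∑ x : X, massx D x * |p1 x - p2 x|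

/-- The distance to calibration: the minimal expected `ℓ1` distance from `p` to a
perfectly calibrated predictor (on the same space, with values in `[0,1]`). -/
def dCE {X : Type} [Fintype X] (D : X × Bool → ℝ) (p : X → ℝ) : ℝ :=
  sInf {c : ℝ | ∃ q : X → ℝ, IsPredictor q ∧ PerfectlyCalibrated D q ∧ c = distp D p q}

/-- The joint distribution of `(p(x), y)`, as a density on `ℝ × Bool`. -/
def jointOf {X : Type} [Fintype X] (D : X × Bool → ℝ) (p : X → ℝ) : ℝ × Bool → ℝ :=
  fun w => ∑ x : X, if p x = w.1 then D (x, w.2) else 0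

/-- A realization of a joint prediction-label distribution `J` on `[0,1] × {0,1}`:
a (finite) set `carrier`, a distribution `D'` on `carrier × Bool`, and a predictor
`p'` whose joint prediction-label distribution is `J`. -/
structure Realization (J : ℝ × Bool → ℝ) where
  carrier : Type
  [inst : Fintype carrier]
  D' : carrier × Bool → ℝ
  p' : carrier → ℝ
  hD' : IsDistribution D'
  hp' : IsPredictor p'
  hJ : jointOf D' p' = J

/-- The distance to calibration of a realization. -/
def Realization.dce {J : ℝ × Bool → ℝ} (R : Realization J) : ℝ :=
  @dCE R.carrier R.inst R.D' R.p'

/-!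
Let `(X₂, D₂, p₂)` be a realization with a perfectly calibrated `q₂` at distance `ε` from `p₂`,
and `(X₁, D₁, p₁)` any other realization. Cut `[0,1]` into buckets of width `δ` and replace `p₁`
by the conditional expectation of the label on each bucket: this is perfectly calibrated and
within `δ + ∑ₖ |E[(p₁ - y) 1{p₁ ∈ k}]|` of `p₁`. The bucket biases depend only on the joint
distribution of `(p₁, y)`, so they equal `E[(p₂ - y) 1{p₂ ∈ k}]`, and calibration of `q₂` makes
`E[(q₂ - y) 1{q₂ ∈ k}]` vanish; their total difference is at most `ε` plus twice the probability
that `p₂` and `q₂` land in different buckets. Averaging over `N` shifts of the grid bounds that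
probability by `ε / δ + 1 / N`, hence `dCE(p₁) ≤ δ + (1 + 2 / δ) ε`, and `δ ≈ √(2ε)` turns this
into `ε + 2√(2ε) ≤ 4√ε`.
-/

attribute [instance] Realization.inst

section Basic

variable {X : Type} [Fintype X] {D : X × Bool → ℝ}

lemma IsDistribution.massx_nonneg (hD : IsDistribution D) (x : X) : 0 ≤ massx D x :=
  add_nonneg (hD.1 _) (hD.1 _)

lemma IsDistribution.sum_massx (hD : IsDistribution D) : ∑ x : X, massx D x = 1 := by
  rw [← hD.2, Fintype.sum_prod_type]
  simp [massx, add_comm]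

lemma expval_eq_sum (f : X × Bool → ℝ) :
    expval D f = ∑ x : X, (D (x, false) * f (x, false) + D (x, true) * f (x, true)) := by
  simp [expval, Fintype.sum_prod_type, add_comm]

lemma distp_nonneg (hD : IsDistribution D) (p q : X → ℝ) : 0 ≤ distp D p q :=
  Finset.sum_nonneg fun x _ => mul_nonneg (hD.massx_nonneg x) (abs_nonneg _)

end Basic

section Joint

variable {X : Type} [Fintype X] {D : X × Bool → ℝ} {p : X → ℝ}

lemma expval_comp_eq_sum_jointOf (F : ℝ → Bool → ℝ) {V : Finset ℝ} (hV : ∀ x, p x ∈ V) :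
    expval D (fun z => F (p z.1) z.2) = ∑ v ∈ V, ∑ b : Bool, jointOf D p (v, b) * F v b := by
  have hsplit : ∀ z : X × Bool,
      D z * F (p z.1) z.2 = ∑ v ∈ V, if p z.1 = v then D z * F v z.2 else 0 := fun z => by
    rw [Finset.sum_ite_eq, if_pos (hV z.1)]
  simp only [expval, hsplit, jointOf, Finset.sum_mul, ite_mul, zero_mul]
  rw [Finset.sum_comm]
  refine Finset.sum_congr rfl fun v _ => ?_
  rw [Fintype.sum_prod_type, Finset.sum_comm]

lemma expval_comp_eq_of_jointOf_eq {X' : Type} [Fintype X'] {D' : X' × Bool → ℝ} {p' : X' → ℝ}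
    (hJ : jointOf D p = jointOf D' p') (F : ℝ → Bool → ℝ) :
    expval D (fun z => F (p z.1) z.2) = expval D' (fun z => F (p' z.1) z.2) := by
  rw [expval_comp_eq_sum_jointOf F (V := Finset.univ.image p ∪ Finset.univ.image p') (by simp),
    expval_comp_eq_sum_jointOf F (V := Finset.univ.image p ∪ Finset.univ.image p') (by simp), hJ]

lemma PerfectlyCalibrated.jointOf_true (hp : PerfectlyCalibrated D p) (v : ℝ) :
    jointOf D p (v, true) = v * (jointOf D p (v, false) + jointOf D p (v, true)) := by
  by_cases hv : v ∈ Set.range p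
  · simp only [jointOf, ← Finset.sum_add_distrib, ite_add_ite, add_zero]
    exact hp v hv
  · have : ∀ x, p x ≠ v := fun x hx => hv ⟨x, hx⟩
    simp [jointOf, this]

lemma PerfectlyCalibrated.expval_mul_eq_zero (hp : PerfectlyCalibrated D p) (h : ℝ → ℝ) :
    expval D (fun z => (p z.1 - yval z.2) * h (p z.1)) = 0 := by
  rw [expval_comp_eq_sum_jointOf (fun v b => (v - yval b) * h v) (V := Finset.univ.image p)
    (by simp)]
  refine Finset.sum_eq_zero fun v _ => ?_
  have := hp.jointOf_true v
  simp only [Fintype.sum_bool, yval, if_true, Bool.false_eq_true, if_false]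
  linear_combination (-h v) * this

end Joint

section Partition

variable {X ι : Type} [Fintype X] [DecidableEq ι] {D : X × Bool → ℝ}

def fiberMass (D : X × Bool → ℝ) (φ : X → ι) (k : ι) : ℝ :=
  ∑ x, if φ x = k then massx D x else 0

def fiberLabelMass (D : X × Bool → ℝ) (φ : X → ι) (k : ι) : ℝ :=
  ∑ x, if φ x = k then D (x, true) else 0

/-- The predictor `E[y | φ(x)]`; on a fiber of mass zero it is `0 / 0 = 0`. -/
def condLabel (D : X × Bool → ℝ) (φ : X → ι) : X → ℝ :=
  fun x => fiberLabelMass D φ (φ x) / fiberMass D φ (φ x)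

def bucketBias (D : X × Bool → ℝ) (p : X → ℝ) (φ : X → ι) (k : ι) : ℝ :=
  expval D (fun z => (p z.1 - yval z.2) * if φ z.1 = k then 1 else 0)

variable {φ : X → ι}

lemma fiberLabelMass_nonneg (hD : IsDistribution D) (k : ι) : 0 ≤ fiberLabelMass D φ k :=
  Finset.sum_nonneg fun x _ => by split_ifs <;> simp [hD.1]

lemma fiberLabelMass_le_fiberMass (hD : IsDistribution D) (k : ι) :
    fiberLabelMass D φ k ≤ fiberMass D φ k :=
  Finset.sum_le_sum fun x _ => by split_ifs <;> simp [massx, hD.1]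

lemma fiberMass_nonneg (hD : IsDistribution D) (k : ι) : 0 ≤ fiberMass D φ k :=
  (fiberLabelMass_nonneg hD k).trans (fiberLabelMass_le_fiberMass hD k)

lemma massx_eq_zero_of_fiberMass_eq_zero (hD : IsDistribution D) {k : ι}
    (hk : fiberMass D φ k = 0) {x : X} (hx : φ x = k) : massx D x = 0 := by
  have hnonneg : ∀ x ∈ Finset.univ, 0 ≤ if φ x = k then massx D x else 0 := fun x _ => by
    split_ifs <;> simp [hD.massx_nonneg]
  simpa [hx] using (Finset.sum_eq_zero_iff_of_nonneg hnonneg).1 hk x (Finset.mem_univ x)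

lemma fiberLabelMass_div_mul_fiberMass (hD : IsDistribution D) (k : ι) :
    fiberLabelMass D φ k / fiberMass D φ k * fiberMass D φ k = fiberLabelMass D φ k := by
  rcases eq_or_ne (fiberMass D φ k) 0 with hk | hk
  · have := fiberLabelMass_le_fiberMass (φ := φ) hD k
    have := fiberLabelMass_nonneg (φ := φ) hD k
    simp only [hk, mul_zero]
    linarith
  · exact div_mul_cancel₀ _ hk

lemma isPredictor_condLabel (hD : IsDistribution D) : IsPredictor (condLabel D φ) := fun _ =>
  ⟨div_nonneg (fiberLabelMass_nonneg hD _) (fiberMass_nonneg hD _),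
    div_le_one_of_le₀ (fiberLabelMass_le_fiberMass hD _) (fiberMass_nonneg hD _)⟩

lemma sum_eq_sum_image_fiber (f : X → ℝ) :
    ∑ x, f x = ∑ k ∈ Finset.univ.image φ, ∑ x, if φ x = k then f x else 0 := by
  rw [← Finset.sum_fiberwise_of_maps_to (g := φ) (t := Finset.univ.image φ) (by simp) f]
  simp only [Finset.sum_filter]

lemma sum_ite_comp_eq_sum_image (r : ι → ℝ) (f : X → ℝ) (v : ℝ) :
    (∑ x, if r (φ x) = v then f x else 0) =
      ∑ k ∈ Finset.univ.image φ, if r k = v then ∑ x, (if φ x = k then f x else 0) else 0 := by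
  rw [sum_eq_sum_image_fiber (φ := φ)]
  refine Finset.sum_congr rfl fun k _ => ?_
  split_ifs with hk
  · exact Finset.sum_congr rfl fun x _ => by by_cases hx : φ x = k <;> simp [hx, hk]
  · exact Finset.sum_eq_zero fun x _ => by by_cases hx : φ x = k <;> simp [hx, hk]

lemma perfectlyCalibrated_condLabel (hD : IsDistribution D) :
    PerfectlyCalibrated D (condLabel D φ) := by
  intro v _
  -- `delta` also unfolds `condLabel` inside the decidability instances of the `if`s
  delta condLabel
  have regroup := sum_ite_comp_eq_sum_image (φ := φ)
    (fun k => fiberLabelMass D φ k / fiberMass D φ k) (v := v)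
  rw [regroup, regroup, Finset.mul_sum]
  refine Finset.sum_congr rfl fun k _ => ?_
  split_ifs with hk
  · rw [← hk]
    exact (fiberLabelMass_div_mul_fiberMass hD k).symm
  · rw [mul_zero]

lemma bucketBias_eq (p : X → ℝ) (k : ι) :
    bucketBias D p φ k = ∑ x, if φ x = k then massx D x * p x - D (x, true) else 0 := by
  rw [bucketBias, expval_eq_sum]
  refine Finset.sum_congr rfl fun x _ => ?_
  split_ifs
  · simp only [yval, massx, Bool.false_eq_true, if_false, if_true, mul_one]
    ring
  · simp

variable {p : X → ℝ} {δ : ℝ}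

lemma abs_fiberMass_mul_sub_le (hD : IsDistribution D)
    (hφ : ∀ x x', φ x = φ x' → |p x - p x'| ≤ δ) {k : ι} {x : X} (hx : φ x = k) :
    |fiberMass D φ k * p x - ∑ x', if φ x' = k then massx D x' * p x' else 0| ≤
      δ * fiberMass D φ k := by
  have hexpand : fiberMass D φ k * p x - (∑ x', if φ x' = k then massx D x' * p x' else 0) =
      ∑ x', if φ x' = k then massx D x' * (p x - p x') else 0 := by
    rw [fiberMass, Finset.sum_mul, ← Finset.sum_sub_distrib]
    refine Finset.sum_congr rfl fun x' _ => ?_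
    split_ifs <;> ring
  rw [hexpand, fiberMass, Finset.mul_sum]
  refine (Finset.abs_sum_le_sum_abs _ _).trans (Finset.sum_le_sum fun x' _ => ?_)
  split_ifs with hx'
  · rw [abs_mul, abs_of_nonneg (hD.massx_nonneg x'), mul_comm δ]
    exact mul_le_mul_of_nonneg_left (hφ x x' (hx.trans hx'.symm)) (hD.massx_nonneg x')
  · simp

lemma sum_fiber_distp_condLabel_le (hD : IsDistribution D)
    (hφ : ∀ x x', φ x = φ x' → |p x - p x'| ≤ δ) (k : ι) :
    (∑ x, if φ x = k then massx D x * |p x - condLabel D φ x| else 0) ≤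
      δ * fiberMass D φ k + |bucketBias D p φ k| := by
  set d := fiberMass D φ k
  set T := fiberLabelMass D φ k
  set P := ∑ x, if φ x = k then massx D x * p x else 0
  rcases (show 0 ≤ d from fiberMass_nonneg hD k).eq_or_lt with hd | hd
  · rw [← hd, mul_zero, zero_add]
    refine le_of_eq_of_le (Finset.sum_eq_zero fun x _ => ?_) (abs_nonneg _)
    split_ifs with hx
    · rw [massx_eq_zero_of_fiberMass_eq_zero hD hd.symm hx, zero_mul]
    · rfl
  have hbias : bucketBias D p φ k = P - T := by
    simp only [bucketBias_eq, P, T, fiberLabelMass, ← Finset.sum_sub_distrib]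
    exact Finset.sum_congr rfl fun x _ => by split_ifs <;> simp
  have hpoint : ∀ x, φ x = k → |p x - condLabel D φ x| ≤ (δ * d + |P - T|) / d := by
    intro x hx
    have hcond : condLabel D φ x = T / d := by rw [condLabel, hx]
    rw [le_div_iff₀ hd, hcond, ← abs_of_pos hd, ← abs_mul, abs_of_pos hd, sub_mul,
      div_mul_cancel₀ _ hd.ne']
    calc |p x * d - T| = |(d * p x - P) + (P - T)| := by ring_nf
      _ ≤ |d * p x - P| + |P - T| := abs_add_le _ _
      _ ≤ δ * d + |P - T| := by grw [abs_fiberMass_mul_sub_le hD hφ hx]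
  calc (∑ x, if φ x = k then massx D x * |p x - condLabel D φ x| else 0)
      ≤ ∑ x, if φ x = k then massx D x * ((δ * d + |P - T|) / d) else 0 :=
        Finset.sum_le_sum fun x _ => by
          split_ifs with hx
          · exact mul_le_mul_of_nonneg_left (hpoint x hx) (hD.massx_nonneg x)
          · rfl
    _ = δ * d + |bucketBias D p φ k| := by
        simp_rw [← ite_zero_mul]
        rw [← Finset.sum_mul, ← fiberMass, mul_div_cancel₀ _ hd.ne', hbias]

lemma distp_condLabel_le (hD : IsDistribution D) (hφ : ∀ x x', φ x = φ x' → |p x - p x'| ≤ δ) :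
    distp D p (condLabel D φ) ≤ δ + ∑ k ∈ Finset.univ.image φ, |bucketBias D p φ k| := by
  have hmass : ∑ k ∈ Finset.univ.image φ, fiberMass D φ k = 1 := by
    rw [← hD.sum_massx, sum_eq_sum_image_fiber (φ := φ)]
    rfl
  calc distp D p (condLabel D φ)
      = ∑ k ∈ Finset.univ.image φ,
          ∑ x, if φ x = k then massx D x * |p x - condLabel D φ x| else 0 :=
        sum_eq_sum_image_fiber _
    _ ≤ ∑ k ∈ Finset.univ.image φ, (δ * fiberMass D φ k + |bucketBias D p φ k|) :=
        Finset.sum_le_sum fun k _ => sum_fiber_distp_condLabel_le hD hφ k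
    _ = δ + ∑ k ∈ Finset.univ.image φ, |bucketBias D p φ k| := by
        rw [Finset.sum_add_distrib, ← Finset.mul_sum, hmass, mul_one]

end Partition

section Discrepancy

variable {κ : Type} [DecidableEq κ]

lemma abs_sub_yval_le_one {v : ℝ} (hv : v ∈ Set.Icc (0 : ℝ) 1) (b : Bool) : |v - yval b| ≤ 1 := by
  rw [abs_le]
  cases b <;> simp only [yval, Bool.false_eq_true, if_false, if_true] <;>
    constructor <;> linarith [hv.1, hv.2]

lemma sum_abs_mul_ite_le (K : Finset κ) (i : κ) (u : ℝ) :
    ∑ k ∈ K, |u * (if i = k then 1 else 0)| ≤ |u| := by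
  have hterm : ∀ k, |u * (if i = k then 1 else 0)| = if i = k then |u| else 0 := fun k => by
    split_ifs <;> simp
  rw [Finset.sum_congr rfl fun k _ => hterm k, Finset.sum_ite_eq]
  split_ifs <;> simp

lemma sum_abs_mul_ite_sub_mul_ite_le (K : Finset κ) (i j : κ) {u w : ℝ}
    (hu : |u| ≤ 1) (hw : |w| ≤ 1) :
    ∑ k ∈ K, |u * (if i = k then 1 else 0) - w * (if j = k then 1 else 0)| ≤
      |u - w| + 2 * (if i = j then 0 else 1) := by
  by_cases h : i = j
  · subst h
    simp only [← sub_mul, if_true, mul_zero, add_zero]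
    exact sum_abs_mul_ite_le K i (u - w)
  · calc _ ≤ ∑ k ∈ K, (|u * (if i = k then 1 else 0)| + |w * (if j = k then 1 else 0)|) :=
          Finset.sum_le_sum fun k _ => abs_sub _ _
      _ ≤ |u| + |w| := by
          rw [Finset.sum_add_distrib]
          exact add_le_add (sum_abs_mul_ite_le K i u) (sum_abs_mul_ite_le K j w)
      _ ≤ |u - w| + 2 * (if i = j then 0 else 1) := by
          rw [if_neg h]
          linarith [abs_nonneg (u - w)]

variable {X : Type} [Fintype X] {D : X × Bool → ℝ} {p q : X → ℝ}

lemma sum_abs_bucketBias_sub_le (hD : IsDistribution D) (hp : IsPredictor p) (hq : IsPredictor q)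
    (g : ℝ → κ) (K : Finset κ) :
    ∑ k ∈ K, |bucketBias D p (fun x => g (p x)) k - bucketBias D q (fun x => g (q x)) k| ≤
      distp D p q + 2 * ∑ x, massx D x * (if g (p x) = g (q x) then 0 else 1) := by
  set e : ℝ → Bool → κ → ℝ := fun v b k => (v - yval b) * if g v = k then 1 else 0
  have hdiff : ∀ k, bucketBias D p (fun x => g (p x)) k - bucketBias D q (fun x => g (q x)) k
      = ∑ z, D z * (e (p z.1) z.2 k - e (q z.1) z.2 k) := fun k => by
    simp only [bucketBias, expval, e, mul_sub, Finset.sum_sub_distrib]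
  calc ∑ k ∈ K, |bucketBias D p (fun x => g (p x)) k - bucketBias D q (fun x => g (q x)) k|
      ≤ ∑ k ∈ K, ∑ z, D z * |e (p z.1) z.2 k - e (q z.1) z.2 k| :=
        Finset.sum_le_sum fun k _ => by
          rw [hdiff]
          refine (Finset.abs_sum_le_sum_abs _ _).trans_eq (Finset.sum_congr rfl fun z _ => ?_)
          rw [abs_mul, abs_of_nonneg (hD.1 z)]
    _ = ∑ z, D z * ∑ k ∈ K, |e (p z.1) z.2 k - e (q z.1) z.2 k| := by
        rw [Finset.sum_comm]
        simp only [Finset.mul_sum]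
    _ ≤ ∑ z, D z * (|p z.1 - q z.1| + 2 * (if g (p z.1) = g (q z.1) then 0 else 1)) :=
        Finset.sum_le_sum fun z _ => mul_le_mul_of_nonneg_left (by
          simpa only [sub_sub_sub_cancel_right] using sum_abs_mul_ite_sub_mul_ite_le K _ _
            (abs_sub_yval_le_one (hp z.1) z.2) (abs_sub_yval_le_one (hq z.1) z.2)) (hD.1 z)
    _ = distp D p q + 2 * ∑ x, massx D x * (if g (p x) = g (q x) then 0 else 1) := by
        rw [← expval, expval_eq_sum, distp, Finset.mul_sum, ← Finset.sum_add_distrib]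
        refine Finset.sum_congr rfl fun x _ => ?_
        simp only [massx]
        ring

end Discrepancy

section ShiftedGrid

lemma abs_sub_lt_of_ediv_eq {a b n : ℤ} (hn : 0 < n) (h : a / n = b / n) : |a - b| < n := by
  have ha := Int.mul_ediv_add_emod a n
  have hb := Int.mul_ediv_add_emod b n
  have := Int.emod_nonneg a hn.ne'
  have := Int.emod_nonneg b hn.ne'
  have := Int.emod_lt_of_pos a hn
  have := Int.emod_lt_of_pos b hn
  rw [h] at ha
  rw [abs_lt]
  constructor <;> linarith

lemma sum_range_add_ediv {N : ℕ} (hN : 0 < N) (m : ℤ) : ∑ j ∈ range N, (m + j) / N = m := by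
  have hstep : ∀ m : ℤ, ∑ j ∈ range N, (m + 1 + j) / N = ∑ j ∈ range N, (m + j) / N + 1 := by
    intro m
    have hshift := Finset.sum_range_succ' (fun j => (m + j) / (N : ℤ)) N
    rw [Finset.sum_range_succ] at hshift
    have hlast : (m + N) / (N : ℤ) = m / N + 1 := by
      rw [Int.add_ediv_of_dvd_right dvd_rfl, Int.ediv_self (by exact_mod_cast hN.ne')]
    push_cast at hshift
    simp only [add_zero] at hshift
    rw [hlast] at hshift
    simp only [add_assoc, add_comm (1 : ℤ)] at hshift ⊢
    linarith
  have hzero : ∑ j ∈ range N, ((0 : ℤ) + j) / N = 0 :=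
    Finset.sum_eq_zero fun j hj => Int.ediv_eq_zero_of_lt (by positivity)
      (by simpa using Finset.mem_range.1 hj)
  induction m using Int.induction_on with
  | zero => exact hzero
  | succ i hi => rw [hstep, hi]
  | pred i hi =>
    have := hstep (-i - 1)
    simp only [sub_add_cancel] at this
    linarith

lemma sum_ite_ediv_eq_le {N : ℕ} (hN : 0 < N) (a b : ℤ) :
    ∑ j ∈ range N, (if (a + j) / N = (b + j) / N then (0 : ℝ) else 1) ≤ |((a - b : ℤ) : ℝ)| := by
  wlog hab : a ≤ b generalizing a b
  · have := this b a (by omega)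
    simp only [eq_comm (a := (b + _) / _)] at this
    simpa [abs_sub_comm] using this
  have hterm : ∀ j : ℕ, (if (a + j) / N = (b + j) / N then (0 : ℝ) else 1) ≤
      (((b + j) / N - (a + j) / N : ℤ) : ℝ) := fun j => by
    have hle : (a + j) / (N : ℤ) ≤ (b + j) / N := Int.ediv_le_ediv (by exact_mod_cast hN) (by omega)
    split_ifs with h
    · exact_mod_cast (by omega : (0 : ℤ) ≤ (b + j) / N - (a + j) / N)
    · exact_mod_cast (by omega : (1 : ℤ) ≤ (b + j) / N - (a + j) / N)
  calc _ ≤ ∑ j ∈ range N, (((b + j) / N - (a + j) / N : ℤ) : ℝ) :=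
        Finset.sum_le_sum fun j _ => hterm j
    _ = ((b - a : ℤ) : ℝ) := by
        rw [← Int.cast_sum, Finset.sum_sub_distrib, sum_range_add_ediv hN, sum_range_add_ediv hN]
    _ ≤ |((a - b : ℤ) : ℝ)| := by
        rw [← abs_neg, ← Int.cast_neg, neg_sub]
        exact le_abs_self _

lemma abs_floor_sub_floor_le (x y : ℝ) : |((⌊x⌋ - ⌊y⌋ : ℤ) : ℝ)| ≤ |x - y| + 1 := by
  have := Int.floor_le x
  have := Int.lt_floor_add_one x
  have := Int.floor_le y
  have := Int.lt_floor_add_one y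
  push_cast
  rw [abs_le]
  constructor <;> linarith [le_abs_self (x - y), neg_abs_le (x - y)]

lemma abs_sub_le_abs_floor_sub_floor_add_one (x y : ℝ) :
    |x - y| ≤ |((⌊x⌋ - ⌊y⌋ : ℤ) : ℝ)| + 1 := by
  have := Int.floor_le x
  have := Int.lt_floor_add_one x
  have := Int.floor_le y
  have := Int.lt_floor_add_one y
  push_cast
  rw [abs_le]
  constructor <;> linarith [le_abs_self ((⌊x⌋ : ℝ) - ⌊y⌋), neg_abs_le ((⌊x⌋ : ℝ) - ⌊y⌋)]

/-- The cell containing `t` when `ℝ` is cut into intervals of length `N * η` with endpoints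
in `N * η * ℤ - j * η`. -/
def shiftedGrid (η : ℝ) (N j : ℕ) (t : ℝ) : ℤ := (⌊t / η⌋ + j) / N

variable {η : ℝ} {N : ℕ}

lemma shiftedGrid_width (hη : 0 < η) (hN : 0 < N) {j : ℕ} {t u : ℝ}
    (h : shiftedGrid η N j t = shiftedGrid η N j u) : |t - u| ≤ N * η := by
  have hcells : |⌊t / η⌋ - ⌊u / η⌋| + 1 ≤ (N : ℤ) := by
    have := abs_sub_lt_of_ediv_eq (by exact_mod_cast hN) h
    rwa [add_sub_add_right_eq_sub, Int.lt_iff_add_one_le] at this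
  have hcells' : |((⌊t / η⌋ - ⌊u / η⌋ : ℤ) : ℝ)| + 1 ≤ N := by exact_mod_cast hcells
  rw [← div_le_iff₀ hη, ← abs_of_pos hη, ← abs_div, sub_div]
  exact (abs_sub_le_abs_floor_sub_floor_add_one _ _).trans hcells'

lemma sum_shiftedGrid_ne_le (hη : 0 < η) (hN : 0 < N) (t u : ℝ) :
    ∑ j ∈ range N, (if shiftedGrid η N j t = shiftedGrid η N j u then (0 : ℝ) else 1) ≤
      |t - u| / η + 1 := by
  have hdiff : |t - u| / η = |t / η - u / η| := by rw [← sub_div, abs_div, abs_of_pos hη]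
  rw [hdiff]
  exact (sum_ite_ediv_eq_le hN _ _).trans (abs_floor_sub_floor_le _ _)

end ShiftedGrid

section DistanceToCalibration

variable {X : Type} [Fintype X] {D : X × Bool → ℝ}

lemma dCE_le_distp (hD : IsDistribution D) (p : X → ℝ) {q : X → ℝ} (hq : IsPredictor q)
    (hqc : PerfectlyCalibrated D q) : dCE D p ≤ distp D p q :=
  csInf_le ⟨0, by rintro _ ⟨q', -, -, rfl⟩; exact distp_nonneg hD p q'⟩ ⟨q, hq, hqc, rfl⟩

lemma isPredictor_const_meanLabel (hD : IsDistribution D) :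
    IsPredictor fun _ : X => ∑ x, D (x, true) := fun _ =>
  ⟨Finset.sum_nonneg fun _ _ => hD.1 _,
    hD.sum_massx ▸ Finset.sum_le_sum fun _ _ => le_add_of_nonneg_left (hD.1 _)⟩

lemma perfectlyCalibrated_const_meanLabel (hD : IsDistribution D) :
    PerfectlyCalibrated D fun _ : X => ∑ x, D (x, true) := by
  rintro _ ⟨_, rfl⟩
  simp [hD.sum_massx]

lemma dCE_nonneg (hD : IsDistribution D) (p : X → ℝ) : 0 ≤ dCE D p :=
  le_csInf ⟨_, _, isPredictor_const_meanLabel hD, perfectlyCalibrated_const_meanLabel hD, rfl⟩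
    (by rintro _ ⟨q, -, -, rfl⟩; exact distp_nonneg hD p q)

lemma dCE_le_one (hD : IsDistribution D) {p : X → ℝ} (hp : IsPredictor p) : dCE D p ≤ 1 := by
  refine (dCE_le_distp hD p (isPredictor_const_meanLabel hD)
    (perfectlyCalibrated_const_meanLabel hD)).trans ?_
  rw [← hD.sum_massx]
  refine Finset.sum_le_sum fun x _ => mul_le_of_le_one_right (hD.massx_nonneg x) ?_
  have hμ := isPredictor_const_meanLabel hD x
  rw [abs_le]
  constructor <;> linarith [(hp x).1, (hp x).2, hμ.1, hμ.2]

end DistanceToCalibration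

lemma le_add_mul_csInf {S : Set ℝ} (hS : S.Nonempty) {a b c : ℝ} (hb : 0 < b)
    (h : ∀ s ∈ S, a ≤ c + b * s) : a ≤ c + b * sInf S := by
  have : (a - c) / b ≤ sInf S :=
    le_csInf hS fun s hs => by rw [div_le_iff₀' hb]; linarith [h s hs]
  rw [div_le_iff₀' hb] at this
  linarith

section Transfer

variable {κ X X' : Type} [DecidableEq κ] [Fintype X] [Fintype X'] {D : X × Bool → ℝ} {p : X → ℝ}
  {D' : X' × Bool → ℝ} {p' q' : X' → ℝ} {δ : ℝ}

lemma bucketBias_comp_eq_of_jointOf_eq (hJ : jointOf D p = jointOf D' p') (g : ℝ → κ) (k : κ) :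
    bucketBias D p (fun x => g (p x)) k = bucketBias D' p' (fun x => g (p' x)) k :=
  expval_comp_eq_of_jointOf_eq hJ fun v b => (v - yval b) * if g v = k then 1 else 0

lemma PerfectlyCalibrated.bucketBias_comp_eq_zero (hq : PerfectlyCalibrated D' q')
    (g : ℝ → κ) (k : κ) : bucketBias D' q' (fun x => g (q' x)) k = 0 :=
  hq.expval_mul_eq_zero fun v => if g v = k then 1 else 0

lemma dCE_le_of_jointOf_eq_of_grid (hD : IsDistribution D) (hD' : IsDistribution D')
    (hp' : IsPredictor p') (hq' : IsPredictor q') (hqc : PerfectlyCalibrated D' q')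
    (hJ : jointOf D p = jointOf D' p') (g : ℝ → κ) (hg : ∀ t u, g t = g u → |t - u| ≤ δ) :
    dCE D p ≤ δ + distp D' p' q' +
      2 * ∑ x, massx D' x * (if g (p' x) = g (q' x) then 0 else 1) := by
  calc dCE D p ≤ distp D p (condLabel D fun x => g (p x)) :=
        dCE_le_distp hD p (isPredictor_condLabel hD) (perfectlyCalibrated_condLabel hD)
    _ ≤ δ + ∑ k ∈ Finset.univ.image (fun x => g (p x)), |bucketBias D p (fun x => g (p x)) k| :=
        distp_condLabel_le hD fun x x' h => hg _ _ h
    _ = δ + ∑ k ∈ Finset.univ.image (fun x => g (p x)),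
          |bucketBias D' p' (fun x => g (p' x)) k - bucketBias D' q' (fun x => g (q' x)) k| := by
        simp only [bucketBias_comp_eq_of_jointOf_eq hJ, hqc.bucketBias_comp_eq_zero, sub_zero]
    _ ≤ _ := by
        rw [add_assoc]
        gcongr
        exact sum_abs_bucketBias_sub_le hD' hp' hq' g _

lemma dCE_le_of_jointOf_eq_add_two_div (hD : IsDistribution D) (hD' : IsDistribution D')
    (hp' : IsPredictor p') (hq' : IsPredictor q') (hqc : PerfectlyCalibrated D' q')
    (hJ : jointOf D p = jointOf D' p') (hδ : 0 < δ) {N : ℕ} (hN : 0 < N) :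
    dCE D p ≤ δ + (1 + 2 / δ) * distp D' p' q' + 2 / N := by
  set ε := distp D' p' q'
  have hNpos : (0 : ℝ) < N := by exact_mod_cast hN
  set η := δ / N
  have hη : 0 < η := by positivity
  have hNη : (N : ℝ) * η = δ := mul_div_cancel₀ δ hNpos.ne'
  set I : ℕ → ℝ := fun j => ∑ x, massx D' x *
    (if shiftedGrid η N j (p' x) = shiftedGrid η N j (q' x) then 0 else 1)
  have hgrid : ∀ j, dCE D p ≤ δ + ε + 2 * I j := fun j =>
    dCE_le_of_jointOf_eq_of_grid hD hD' hp' hq' hqc hJ (shiftedGrid η N j)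
      fun _ _ h => hNη ▸ shiftedGrid_width hη hN h
  have hI : ∑ j ∈ range N, I j ≤ N * ε / δ + 1 := by
    calc ∑ j ∈ range N, I j = ∑ x, massx D' x * ∑ j ∈ range N,
          (if shiftedGrid η N j (p' x) = shiftedGrid η N j (q' x) then (0 : ℝ) else 1) := by
          rw [Finset.sum_comm]
          simp only [Finset.mul_sum]
      _ ≤ ∑ x, massx D' x * (|p' x - q' x| / η + 1) :=
          Finset.sum_le_sum fun x _ => mul_le_mul_of_nonneg_left
            (sum_shiftedGrid_ne_le hη hN _ _) (hD'.massx_nonneg x)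
      _ = N * ε / δ + 1 := by
          simp only [mul_add, mul_one, Finset.sum_add_distrib, hD'.sum_massx, ← mul_div_assoc,
            ← Finset.sum_div]
          rw [← distp, div_div_eq_mul_div, mul_comm ε]
  have havg : N * dCE D p ≤ N * (δ + ε) + 2 * (N * ε / δ + 1) :=
    calc (N : ℝ) * dCE D p = ∑ j ∈ range N, dCE D p := by simp
      _ ≤ ∑ j ∈ range N, (δ + ε + 2 * I j) := Finset.sum_le_sum fun j _ => hgrid j
      _ = N * (δ + ε) + 2 * ∑ j ∈ range N, I j := by
          simp [Finset.sum_add_distrib, Finset.mul_sum, mul_add]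
      _ ≤ N * (δ + ε) + 2 * (N * ε / δ + 1) := by gcongr
  rw [← mul_le_mul_iff_right₀ hNpos]
  calc (N : ℝ) * dCE D p ≤ N * (δ + ε) + 2 * (N * ε / δ + 1) := havg
    _ = N * (δ + (1 + 2 / δ) * ε + 2 / N) := by field_simp; ring

lemma dCE_le_of_jointOf_eq_of_calibrated (hD : IsDistribution D) (hD' : IsDistribution D')
    (hp' : IsPredictor p') (hq' : IsPredictor q') (hqc : PerfectlyCalibrated D' q')
    (hJ : jointOf D p = jointOf D' p') (hδ : 0 < δ) :
    dCE D p ≤ δ + (1 + 2 / δ) * distp D' p' q' := by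
  have hlim := (tendsto_const_div_atTop_nhds_zero_nat (2 : ℝ)).const_add
    (δ + (1 + 2 / δ) * distp D' p' q')
  rw [add_zero] at hlim
  exact ge_of_tendsto hlim ((Filter.eventually_gt_atTop 0).mono fun _ hN =>
    dCE_le_of_jointOf_eq_add_two_div hD hD' hp' hq' hqc hJ hδ hN)

lemma dCE_le_of_jointOf_eq (hD : IsDistribution D) (hD' : IsDistribution D')
    (hp' : IsPredictor p') (hJ : jointOf D p = jointOf D' p') (hδ : 0 < δ) :
    dCE D p ≤ δ + (1 + 2 / δ) * dCE D' p' := by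
  refine le_add_mul_csInf ?_ (by positivity) ?_
  · exact ⟨_, _, isPredictor_const_meanLabel hD', perfectlyCalibrated_const_meanLabel hD', rfl⟩
  · rintro _ ⟨q', hq', hqc, rfl⟩
    exact dCE_le_of_jointOf_eq_of_calibrated hD hD' hp' hq' hqc hJ hδ

end Transfer

namespace Realization

variable {J : ℝ × Bool → ℝ}

lemma dce_nonneg (R : Realization J) : 0 ≤ R.dce := dCE_nonneg R.hD' R.p'

lemma dce_le (R R' : Realization J) {δ : ℝ} (hδ : 0 < δ) : R.dce ≤ δ + (1 + 2 / δ) * R'.dce :=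
  dCE_le_of_jointOf_eq R.hD' R'.hD' R'.hp' (R.hJ.trans R'.hJ.symm) hδ

end Realization

lemma le_four_mul_sqrt_of_forall_le {a L : ℝ} (hL0 : 0 ≤ L) (hL1 : L ≤ 1)
    (h : ∀ δ > 0, a ≤ δ + (1 + 2 / δ) * L) : a ≤ 4 * √L := by
  refine le_of_forall_pos_le_add fun η hη => ?_
  set s := √(2 * L)
  have hs : s ^ 2 = 2 * L := Real.sq_sqrt (by linarith)
  have hs0 : 0 ≤ s := Real.sqrt_nonneg _
  have hδ : 0 < s + η := by linarith
  have hfrac : 2 / (s + η) * L ≤ s := by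
    rw [div_mul_eq_mul_div, div_le_iff₀ hδ]
    nlinarith
  have hsL : s ≤ 3 / 2 * √L := by
    rw [show s = √2 * √L from Real.sqrt_mul' _ hL0]
    gcongr
    rw [Real.sqrt_le_left (by norm_num)]
    norm_num
  have hL : L ≤ √L := by
    have := Real.sqrt_le_one.2 hL1
    nlinarith [Real.mul_self_sqrt hL0, Real.sqrt_nonneg L]
  linarith [h (s + η) hδ]

/-- the upper distance to calibration is at most `4·sqrt` of the lower
distance to calibration: every realization `(X', D', p')` of `J*` satisfies
`dCE(p', D') ≤ 4·sqrt(dCE_lower(J*))`, and hence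
`dCE_upper(J*) ≤ 4·sqrt(dCE_lower(J*))`. -/
theorem upper_dCE_le_sqrt_lower_dCE
    {X : Type} [Fintype X] (D : X × Bool → ℝ) (hD : IsDistribution D)
    (p : X → ℝ) (hp : IsPredictor p) :
    (∀ R : Realization (jointOf D p),
        R.dce ≤ 4 * Real.sqrt
          (sInf {c : ℝ | ∃ R' : Realization (jointOf D p), c = R'.dce})) ∧
      sSup {c : ℝ | ∃ R : Realization (jointOf D p), c = R.dce} ≤
        4 * Real.sqrt (sInf {c : ℝ | ∃ R : Realization (jointOf D p), c = R.dce}) := by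
  set S := {c : ℝ | ∃ R : Realization (jointOf D p), c = R.dce}
  let R₀ : Realization (jointOf D p) := ⟨X, D, p, hD, hp, rfl⟩
  have hS : S.Nonempty := ⟨R₀.dce, R₀, rfl⟩
  have hS0 : ∀ c ∈ S, 0 ≤ c := by rintro _ ⟨R, rfl⟩; exact R.dce_nonneg
  have hL0 : 0 ≤ sInf S := le_csInf hS hS0
  have hL1 : sInf S ≤ 1 := (csInf_le ⟨0, hS0⟩ ⟨R₀, rfl⟩).trans (dCE_le_one hD hp)
  have hR : ∀ R : Realization (jointOf D p), R.dce ≤ 4 * √(sInf S) := fun R =>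
    le_four_mul_sqrt_of_forall_le hL0 hL1 fun δ hδ =>
      le_add_mul_csInf hS (by positivity) (by rintro _ ⟨R', rfl⟩; exact R.dce_le R' hδ)
  exact ⟨hR, csSup_le hS (by rintro _ ⟨R, rfl⟩; exact hR R)⟩
end
end

section
/- Let X be a finite set, D* a probability distribution on X × {0,1} with random pair (x, y*), and p : X → [0,1] a predictor. Let B be an interval partition of [0,1] into disjoint intervals I_1, ..., I_k, and let q_B be the canonical predictor for B, defined by q_B(x) = E[y* | p(x) ∈ I_j] for every x with p(x) ∈ I_j. Then q_B is perfectly calibrated under D* and d(p, q_B) ≤ intCE_B(p, D*). -/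
open scoped Classical
open Finset Set

noncomputable section

/-- `I` is an interval partition of `[0,1]` into `k` disjoint intervals. -/
def IsIntervalPartition (k : ℕ) (I : Fin k → Set ℝ) : Prop :=
  (∀ j, (I j).OrdConnected) ∧
    (Pairwise fun j j' => Disjoint (I j) (I j')) ∧
    (⋃ j, I j) = Set.Icc (0 : ℝ) 1

/-- The width of an interval partition: the length (diameter) of the longest interval. -/
def widthB (k : ℕ) (I : Fin k → Set ℝ) : ℝ := ⨆ j, Metric.diam (I j)

/-- The calibration error of `p` for the interval partition `I`:
`CE_B(p, D*) = Σ_j |E[(y* - p(x))·1(p(x) ∈ I_j)]|`. -/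
def CEB {X : Type} [Fintype X] (D : X × Bool → ℝ) (p : X → ℝ)
    (k : ℕ) (I : Fin k → Set ℝ) : ℝ :=
  ∑ j : Fin k, |∑ x : X, if p x ∈ I j then D (x, true) - p x * massx D x else 0|

/-- The interval calibration error `intCE_B(p, D*) = CE_B(p, D*) + width(B)`. -/
def intCEB {X : Type} [Fintype X] (D : X × Bool → ℝ) (p : X → ℝ)
    (k : ℕ) (I : Fin k → Set ℝ) : ℝ :=
  CEB D p k I + widthB k I

/-- the canonical predictor `q_B` of an interval partition `B`,
`q_B(x) = E[y* | p(x) ∈ I_j]` for `p(x) ∈ I_j`, is perfectly calibrated, and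
`d(p, q_B) ≤ intCE_B(p, D*)`. -/
theorem canonical_predictor_calibrated_and_close
    {X : Type} [Fintype X] (D : X × Bool → ℝ) (hD : IsDistribution D)
    (p : X → ℝ) (hp : IsPredictor p)
    (k : ℕ) (I : Fin k → Set ℝ) (hI : IsIntervalPartition k I)
    (q : X → ℝ)
    (hq : ∀ j : Fin k, ∀ x : X, p x ∈ I j →
      q x = (∑ x' : X, if p x' ∈ I j then D (x', true) else 0) /
        (∑ x' : X, if p x' ∈ I j then massx D x' else 0)) :
    PerfectlyCalibrated D q ∧ distp D p q ≤ intCEB D p k I := by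
  obtain ⟨hD0, hD1⟩ := hD
  obtain ⟨hord, hdisj, hcover⟩ := hI
  have hmass0 : ∀ x, 0 ≤ massx D x := fun x => add_nonneg (hD0 _) (hD0 _)
  have hDt : ∀ x, D (x, true) ≤ massx D x := fun x => le_add_of_nonneg_left (hD0 _)
  have hex : ∀ x : X, ∃ j, p x ∈ I j := by
    intro x
    have : p x ∈ ⋃ j, I j := hcover ▸ hp x
    simpa using this
  have huniq : ∀ x : X, ∀ j j' : Fin k, p x ∈ I j → p x ∈ I j' → j = j' := by
    intro x j j' h h'
    by_contra hne
    exact Set.disjoint_left.mp (hdisj hne) h h'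
  set num : Fin k → ℝ := fun j => ∑ x : X, if p x ∈ I j then D (x, true) else 0 with hnum
  set den : Fin k → ℝ := fun j => ∑ x : X, if p x ∈ I j then massx D x else 0 with hden
  have hden0 : ∀ j, 0 ≤ den j := by
    intro j
    apply Finset.sum_nonneg
    intro x _
    by_cases hx : p x ∈ I j <;> simp [hx, hmass0 x]
  have hnum0 : ∀ j, 0 ≤ num j := by
    intro j
    apply Finset.sum_nonneg
    intro x _
    by_cases hx : p x ∈ I j <;> simp [hx, hD0 (x, true)]
  have hnum_le : ∀ j, num j ≤ den j := by
    intro j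
    apply Finset.sum_le_sum
    intro x _
    by_cases hx : p x ∈ I j <;> simp [hx, hDt x]
  have hq' : ∀ x : X, ∀ j : Fin k, p x ∈ I j → q x = num j / den j := by
    intro x j hx
    exact hq j x hx
  have hnum_eq : ∀ j, num j = (num j / den j) * den j := by
    intro j
    rcases eq_or_lt_of_le (hden0 j) with h0 | h0
    · have h1 : num j = 0 := le_antisymm (h0 ▸ hnum_le j) (hnum0 j)
      simp [h1]
    · field_simp
  have hsplit : ∀ f : X → ℝ,
      (∑ x : X, f x) = ∑ j : Fin k, ∑ x : X, if p x ∈ I j then f x else 0 := by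
    intro f
    have h1 : ∀ x : X, f x = ∑ j : Fin k, if p x ∈ I j then f x else 0 := by
      intro x
      obtain ⟨j, hj⟩ := hex x
      rw [Finset.sum_eq_single j]
      · simp [hj]
      · intro j' _ hne
        have hnx : p x ∉ I j' := fun h => hne (huniq x j' j h hj)
        simp [hnx]
      · simp
    calc (∑ x : X, f x) = ∑ x : X, ∑ j : Fin k, if p x ∈ I j then f x else 0 :=
          Finset.sum_congr rfl fun x _ => h1 x
      _ = ∑ j : Fin k, ∑ x : X, if p x ∈ I j then f x else 0 := Finset.sum_comm
  have hcal : PerfectlyCalibrated D q := by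
    rintro v ⟨x0, rfl⟩
    rw [hsplit (fun x => if q x = q x0 then D (x, true) else 0),
        hsplit (fun x => if q x = q x0 then massx D x else 0), Finset.mul_sum]
    refine Finset.sum_congr rfl fun j _ => ?_
    by_cases hE : num j / den j = q x0
    · have hL : (∑ x : X, if p x ∈ I j then (if q x = q x0 then D (x, true) else 0) else 0)
          = num j := by
        refine Finset.sum_congr rfl fun x _ => ?_
        by_cases hx : p x ∈ I j <;> simp [hx, hq' x j, hE]
      have hR : (∑ x : X, if p x ∈ I j then (if q x = q x0 then massx D x else 0) else 0)
          = den j := by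
        refine Finset.sum_congr rfl fun x _ => ?_
        by_cases hx : p x ∈ I j <;> simp [hx, hq' x j, hE]
      rw [hL, hR, ← hE, ← hnum_eq j]
    · have hL : (∑ x : X, if p x ∈ I j then (if q x = q x0 then D (x, true) else 0) else 0)
          = 0 := by
        refine Finset.sum_eq_zero fun x _ => ?_
        by_cases hx : p x ∈ I j <;> simp [hx, hq' x j, hE]
      have hR : (∑ x : X, if p x ∈ I j then (if q x = q x0 then massx D x else 0) else 0)
          = 0 := by
        refine Finset.sum_eq_zero fun x _ => ?_
        by_cases hx : p x ∈ I j <;> simp [hx, hq' x j, hE]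
      rw [hL, hR, mul_zero]
  refine ⟨hcal, ?_⟩
  set c : Fin k → ℝ :=
    fun j => ∑ x : X, if p x ∈ I j then D (x, true) - p x * massx D x else 0 with hc
  have hbdd : ∀ j, Bornology.IsBounded (I j) := by
    intro j
    exact (Metric.isBounded_Icc (0 : ℝ) 1).subset (hcover ▸ Set.subset_iUnion I j)
  have hdiam0 : ∀ j, 0 ≤ Metric.diam (I j) := fun j => Metric.diam_nonneg
  have hbucket : ∀ j : Fin k,
      (∑ x : X, if p x ∈ I j then massx D x * |p x - num j / den j| else 0)
        ≤ den j * Metric.diam (I j) + |c j| := by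
    intro j
    rcases eq_or_lt_of_le (hden0 j) with h0 | h0
    · have hz : (∑ x : X, if p x ∈ I j then massx D x * |p x - num j / den j| else 0) = 0 := by
        have hz' : ∀ x ∈ (Finset.univ : Finset X),
            (if p x ∈ I j then massx D x else 0) = 0 := by
          intro x _
          refine (Finset.sum_eq_zero_iff_of_nonneg ?_).mp h0.symm x (Finset.mem_univ x)
          intro x' _
          by_cases hx' : p x' ∈ I j <;> simp [hx', hmass0 x']
        refine Finset.sum_eq_zero fun x _ => ?_
        by_cases hx : p x ∈ I j
        · have := hz' x (Finset.mem_univ x)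
          rw [if_pos hx] at this
          simp [hx, this]
        · simp [hx]
      rw [hz, ← h0]
      positivity
    · have key : ∀ x : X, p x ∈ I j →
          |p x * den j - num j| ≤ den j * Metric.diam (I j) + |c j| := by
        intro x hx
        have expand : p x * den j - num j
            = (∑ x' : X, if p x' ∈ I j then (p x - p x') * massx D x' else 0) - c j := by
          simp only [hnum, hden, hc, Finset.mul_sum, ← Finset.sum_sub_distrib]
          refine Finset.sum_congr rfl fun x' _ => ?_
          by_cases hx' : p x' ∈ I j <;> simp [hx'] <;> ring
        calc |p x * den j - num j|
            ≤ |∑ x' : X, if p x' ∈ I j then (p x - p x') * massx D x' else 0| + |c j| := by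
              rw [expand]; exact abs_sub _ _
          _ ≤ (∑ x' : X, if p x' ∈ I j then Metric.diam (I j) * massx D x' else 0) + |c j| := by
              gcongr
              refine (Finset.abs_sum_le_sum_abs _ _).trans (Finset.sum_le_sum fun x' _ => ?_)
              by_cases hx' : p x' ∈ I j
              · simp only [if_pos hx']
                rw [abs_mul, abs_of_nonneg (hmass0 x')]
                have hd : |p x - p x'| ≤ Metric.diam (I j) := by
                  rw [← Real.dist_eq]
                  exact Metric.dist_le_diam_of_mem (hbdd j) hx hx'
                exact mul_le_mul_of_nonneg_right hd (hmass0 x')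
              · simp [hx']
          _ = den j * Metric.diam (I j) + |c j| := by
              have hS : (∑ x' : X, if p x' ∈ I j then Metric.diam (I j) * massx D x' else 0)
                  = Metric.diam (I j) * ∑ x' : X, if p x' ∈ I j then massx D x' else 0 := by
                rw [Finset.mul_sum]
                refine Finset.sum_congr rfl fun x' _ => ?_
                by_cases hx' : p x' ∈ I j <;> simp [hx']
              rw [hS]
              simp only [hden]
              ring
      have hstep : ∀ x : X, p x ∈ I j →
          massx D x * |p x - num j / den j|
            ≤ massx D x * ((den j * Metric.diam (I j) + |c j|) / den j) := by
        intro x hx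
        refine mul_le_mul_of_nonneg_left ?_ (hmass0 x)
        have heq : p x - num j / den j = (p x * den j - num j) / den j := by
          field_simp
        rw [heq, abs_div, abs_of_pos h0]
        exact (div_le_div_iff_of_pos_right h0).mpr (key x hx)
      calc (∑ x : X, if p x ∈ I j then massx D x * |p x - num j / den j| else 0)
          ≤ ∑ x : X, if p x ∈ I j then
              massx D x * ((den j * Metric.diam (I j) + |c j|) / den j) else 0 := by
            refine Finset.sum_le_sum fun x _ => ?_
            by_cases hx : p x ∈ I j
            · simpa [hx] using hstep x hx
            · simp [hx]
        _ = den j * ((den j * Metric.diam (I j) + |c j|) / den j) := by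
            have hS : (∑ x : X, if p x ∈ I j then
                massx D x * ((den j * Metric.diam (I j) + |c j|) / den j) else 0)
                = (∑ x : X, if p x ∈ I j then massx D x else 0)
                  * ((den j * Metric.diam (I j) + |c j|) / den j) := by
              conv_rhs => rw [Finset.sum_mul]
              refine Finset.sum_congr rfl fun x _ => ?_
              by_cases hx : p x ∈ I j <;> simp [hx]
            rw [hS]
        _ = den j * Metric.diam (I j) + |c j| := by
            field_simp
  have hrw : distp D p q
      = ∑ j : Fin k, ∑ x : X, if p x ∈ I j then massx D x * |p x - num j / den j| else 0 := by
    rw [distp, hsplit (fun x => massx D x * |p x - q x|)]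
    refine Finset.sum_congr rfl fun j _ => Finset.sum_congr rfl fun x _ => ?_
    by_cases hx : p x ∈ I j <;> simp [hx, hq' x j]
  have hsum_den : (∑ j : Fin k, den j) = 1 := by
    rw [hden, ← hsplit (massx D), ← hD1, Fintype.sum_prod_type]
    refine Finset.sum_congr rfl fun x _ => ?_
    simp [massx, Fintype.sum_bool, add_comm]
  have hwidth : ∀ j, Metric.diam (I j) ≤ widthB k I := by
    intro j
    have h := le_ciSup (f := fun j => Metric.diam (I j)) (Set.finite_range _).bddAbove j
    simpa [widthB] using h
  have hCEB : CEB D p k I = ∑ j : Fin k, |c j| := by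
    simp only [CEB, hc]
  rw [hrw]
  calc (∑ j : Fin k, ∑ x : X, if p x ∈ I j then massx D x * |p x - num j / den j| else 0)
      ≤ ∑ j : Fin k, (den j * Metric.diam (I j) + |c j|) :=
        Finset.sum_le_sum fun j _ => hbucket j
    _ ≤ ∑ j : Fin k, (den j * widthB k I + |c j|) := by
        refine Finset.sum_le_sum fun j _ => ?_
        exact add_le_add (mul_le_mul_of_nonneg_left (hwidth j) (hden0 j)) le_rfl
    _ = (∑ j : Fin k, den j) * widthB k I + ∑ j : Fin k, |c j| := by
        rw [Finset.sum_add_distrib, Finset.sum_mul]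
    _ = widthB k I + CEB D p k I := by rw [hsum_den, one_mul, hCEB]
    _ = intCEB D p k I := by rw [intCEB, add_comm]
end
end

section
/- Let X be a finite set, D* a probability distribution on X × {0,1} with random pair (x, y*), and p : X → [0,1] a predictor. Suppose there exists a perfectly calibrated predictor q : X → [0,1] under D* with d(p, q) ≤ δ for some δ ∈ (0, 1]. Then there exists an interval partition B of [0,1] such that intCE_B(p, D*) ≤ 4·sqrt(δ). -/
open scoped Classical
open Finset Set

noncomputable section

lemma cross_count (N : ℕ) (hN : 0 < N) (η : ℝ) (hη : 0 < η) (a b : ℝ) (hab : a ≤ b) :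
    ((((Finset.range N).filter
        (fun (r : ℕ) => ⌊(a - (r:ℝ)*η)/((N:ℝ)*η)⌋ ≠ ⌊(b - (r:ℝ)*η)/((N:ℝ)*η)⌋)).card : ℝ))
      ≤ (b - a)/η + 1 := by
  set w : ℝ := (N:ℝ)*η with hw
  have hw0 : 0 < w := by positivity
  set f : ℕ → ℤ := fun r => (r : ℤ) + ⌊(b - (r:ℝ)*η)/w⌋ * N with hf
  have hfval : ∀ r : ℕ, ((f r : ℝ)) * η = r*η + ⌊(b - (r:ℝ)*η)/w⌋ * w := by
    intro r
    push_cast [hf]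
    rw [hw]; ring
  have hmaps : ∀ r ∈ (Finset.range N).filter
      (fun (r : ℕ) => ⌊(a - (r:ℝ)*η)/w⌋ ≠ ⌊(b - (r:ℝ)*η)/w⌋),
      f r ∈ Finset.Ioc ⌊a/η⌋ ⌊b/η⌋ := by
    intro r hr
    simp only [Finset.mem_filter, Finset.mem_range] at hr
    obtain ⟨hrN, hne⟩ := hr
    have hmono : ⌊(a - r*η)/w⌋ ≤ ⌊(b - (r:ℝ)*η)/w⌋ := by
      apply Int.floor_le_floor
      gcongr
    have hlt : ⌊(a - r*η)/w⌋ < ⌊(b - (r:ℝ)*η)/w⌋ := lt_of_le_of_ne hmono hne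
    have hub : ((f r : ℝ)) * η ≤ b := by
      rw [hfval r]
      have h0 : (⌊(b - (r:ℝ)*η)/w⌋ : ℝ) * w ≤ b - (r:ℝ)*η := by
        have h9 := Int.floor_le ((b - (r:ℝ)*η)/w)
        calc (⌊(b - (r:ℝ)*η)/w⌋ : ℝ) * w ≤ ((b - (r:ℝ)*η)/w) * w :=
              mul_le_mul_of_nonneg_right h9 hw0.le
          _ = b - (r:ℝ)*η := by field_simp
      linarith
    have hlb : a < ((f r : ℝ)) * η := by
      rw [hfval r]
      have h1 : (a - r*η)/w < (⌊(a - r*η)/w⌋ : ℝ) + 1 := Int.lt_floor_add_one _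
      have h2 : (⌊(a - r*η)/w⌋ : ℝ) + 1 ≤ (⌊(b - (r:ℝ)*η)/w⌋ : ℝ) := by
        have : ⌊(a - r*η)/w⌋ + 1 ≤ ⌊(b - (r:ℝ)*η)/w⌋ := hlt
        exact_mod_cast this
      have h1' : a - (r:ℝ)*η < ((⌊(a - (r:ℝ)*η)/w⌋ : ℝ) + 1) * w := by
        have := mul_lt_mul_of_pos_right h1 hw0
        calc a - (r:ℝ)*η = ((a - (r:ℝ)*η)/w) * w := by field_simp
          _ < ((⌊(a - (r:ℝ)*η)/w⌋ : ℝ) + 1) * w := this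
      have h2' : ((⌊(a - (r:ℝ)*η)/w⌋ : ℝ) + 1) * w ≤ (⌊(b - (r:ℝ)*η)/w⌋ : ℝ) * w :=
        mul_le_mul_of_nonneg_right h2 hw0.le
      linarith
    rw [Finset.mem_Ioc]
    constructor
    · rw [Int.floor_lt]
      rw [div_lt_iff₀ hη]
      exact hlb
    · rw [Int.le_floor]
      rw [le_div_iff₀ hη]
      exact hub
  have hinj : Set.InjOn f ((Finset.range N).filter
      (fun (r : ℕ) => ⌊(a - (r:ℝ)*η)/w⌋ ≠ ⌊(b - (r:ℝ)*η)/w⌋)) := by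
    intro r1 h1 r2 h2 hfe
    simp only [Finset.coe_filter, Set.mem_setOf_eq, Finset.mem_range] at h1 h2
    have e1 : f r1 % (N:ℤ) = (r1 : ℤ) := by
      rw [hf]
      simp only
      rw [Int.add_mul_emod_self_right]
      exact Int.emod_eq_of_lt (by positivity) (by exact_mod_cast h1.1)
    have e2 : f r2 % (N:ℤ) = (r2 : ℤ) := by
      rw [hf]
      simp only
      rw [Int.add_mul_emod_self_right]
      exact Int.emod_eq_of_lt (by positivity) (by exact_mod_cast h2.1)
    have : (r1 : ℤ) = (r2 : ℤ) := by rw [← e1, ← e2, hfe]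
    exact_mod_cast this
  have hcard := Finset.card_le_card_of_injOn f hmaps hinj
  have hIoc : ((Finset.Ioc ⌊a/η⌋ ⌊b/η⌋).card : ℝ) ≤ (b - a)/η + 1 := by
    rw [Int.card_Ioc]
    have hfl : ⌊a/η⌋ ≤ ⌊b/η⌋ := Int.floor_le_floor (by gcongr)
    have : ((⌊b/η⌋ - ⌊a/η⌋).toNat : ℝ) = ((⌊b/η⌋ : ℝ) - (⌊a/η⌋ : ℝ)) := by
      rw [← Int.cast_natCast, Int.toNat_of_nonneg (by omega)]
      push_cast; ring
    rw [this]
    have h1 : (⌊b/η⌋ : ℝ) ≤ b/η := Int.floor_le _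
    have h2 : a/η - 1 < (⌊a/η⌋ : ℝ) := Int.sub_one_lt_floor _
    have h3 : (b-a)/η = b/η - a/η := by ring
    linarith
  calc ((((Finset.range N).filter
        (fun (r : ℕ) => ⌊(a - (r:ℝ)*η)/w⌋ ≠ ⌊(b - (r:ℝ)*η)/w⌋)).card : ℝ))
      ≤ ((Finset.Ioc ⌊a/η⌋ ⌊b/η⌋).card : ℝ) := by exact_mod_cast hcard
    _ ≤ (b - a)/η + 1 := hIoc

lemma calib_sum_zero {X : Type} [Fintype X] (D : X × Bool → ℝ)
    (q : X → ℝ) (hcal : PerfectlyCalibrated D q) (P : ℝ → Prop) :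
    ∑ x : X, (if P (q x) then D (x, true) - q x * massx D x else 0) = 0 := by
  classical
  rw [← Finset.sum_fiberwise_of_maps_to (g := q) (t := Finset.univ.image q)
      (fun x _ => Finset.mem_image_of_mem q (Finset.mem_univ x))]
  refine Finset.sum_eq_zero fun v hv => ?_
  by_cases hP : P v
  · have h1 : ∀ x ∈ Finset.univ.filter (fun x => q x = v),
        (if P (q x) then D (x, true) - q x * massx D x else 0)
          = D (x, true) - v * massx D x := by
      intro x hx
      simp only [Finset.mem_filter] at hx
      rw [hx.2, if_pos hP]
    rw [Finset.sum_congr rfl h1]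
    have hvr : v ∈ Set.range q := by
      obtain ⟨x, -, hx⟩ := Finset.mem_image.1 hv
      exact ⟨x, hx⟩
    have h2 := hcal v hvr
    rw [Finset.sum_sub_distrib, ← Finset.mul_sum]
    rw [Finset.sum_filter, Finset.sum_filter, h2]
    ring
  · refine Finset.sum_eq_zero fun x hx => ?_
    simp only [Finset.mem_filter] at hx
    rw [hx.2, if_neg hP]


set_option maxHeartbeats 1000000 in
/-- if `p` is within expected `ℓ1` distance `δ ∈ (0,1]` of some
perfectly calibrated predictor `q`, then there is an interval partition `B` of `[0,1]`
with `intCE_B(p, D*) ≤ 4·sqrt(δ)`. -/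
theorem exists_interval_partition_of_close_to_calibrated
    {X : Type} [Fintype X] (D : X × Bool → ℝ) (hD : IsDistribution D)
    (p : X → ℝ) (hp : IsPredictor p)
    (q : X → ℝ) (hq : IsPredictor q) (hcal : PerfectlyCalibrated D q)
    (δ : ℝ) (hδ : δ ∈ Set.Ioc (0 : ℝ) 1) (hclose : distp D p q ≤ δ) :
    ∃ (k : ℕ) (I : Fin k → Set ℝ), IsIntervalPartition k I ∧
      intCEB D p k I ≤ 4 * Real.sqrt δ := by
  obtain ⟨hδ0, hδ1⟩ := hδ
  have hDpos := hD.1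
  have hmass1 : ∑ x : X, massx D x = 1 := by
    rw [← hD.2, Fintype.sum_prod_type]
    refine Finset.sum_congr rfl fun x _ => ?_
    rw [Fintype.sum_bool, massx]
    ring
  have hm0 : ∀ x, 0 ≤ massx D x := fun x => add_nonneg (hDpos _) (hDpos _)
  have hgabs : ∀ x, |D (x, true) - q x * massx D x| ≤ massx D x := by
    intro x
    rw [abs_le]
    have h1 : 0 ≤ D (x, true) := hDpos _
    have h2 : D (x, true) ≤ massx D x := by
      have := hDpos (x, false)
      rw [massx]; linarith
    have h3 : 0 ≤ q x * massx D x := mul_nonneg (hq x).1 (hm0 x)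
    have h4 : q x * massx D x ≤ massx D x := by
      nlinarith [(hq x).2, hm0 x]
    constructor <;> linarith
  by_cases hbig : (1:ℝ)/4 ≤ δ
  · refine ⟨1, fun _ => Set.Icc 0 1, ⟨fun _ => Set.ordConnected_Icc, ?_, ?_⟩, ?_⟩
    · intro i j hij; exact absurd (Subsingleton.elim i j) hij
    · exact Set.iUnion_const _
    · have hCE : CEB D p 1 (fun _ => Set.Icc 0 1)
          = |∑ x : X, (D (x, true) - p x * massx D x)| := by
        rw [CEB, Fin.sum_univ_one]
        congr 1
        exact Finset.sum_congr rfl fun x _ => if_pos (hp x)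
      have hwidth : widthB 1 (fun _ => Set.Icc 0 1) = 1 := by
        rw [widthB, ciSup_const, Real.diam_Icc zero_le_one]; norm_num
      have hs1 : ∑ x : X, D (x, true) ≤ 1 := by
        rw [← hmass1]
        refine Finset.sum_le_sum fun x _ => ?_
        have := hDpos (x, false); rw [massx]; linarith
      have hs0 : 0 ≤ ∑ x : X, D (x, true) := Finset.sum_nonneg fun x _ => hDpos _
      have hp1 : ∑ x : X, p x * massx D x ≤ 1 := by
        rw [← hmass1]
        refine Finset.sum_le_sum fun x _ => ?_
        nlinarith [(hp x).2, hm0 x]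
      have hp0 : 0 ≤ ∑ x : X, p x * massx D x :=
        Finset.sum_nonneg fun x _ => mul_nonneg (hp x).1 (hm0 x)
      have habs : |∑ x : X, (D (x, true) - p x * massx D x)| ≤ 1 := by
        rw [Finset.sum_sub_distrib, abs_le]
        constructor <;> linarith
      have hsq : (1:ℝ)/2 ≤ Real.sqrt δ := by
        have : Real.sqrt (1/4) ≤ Real.sqrt δ := Real.sqrt_le_sqrt hbig
        have h14 : Real.sqrt ((1:ℝ)/4) = 1/2 := by
          rw [show (1:ℝ)/4 = (1/2)^2 by norm_num, Real.sqrt_sq (by norm_num)]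
        linarith [h14 ▸ this]
      rw [intCEB, hCE, hwidth]
      linarith
  · push_neg at hbig
    set w := Real.sqrt δ with hwdef
    have hw0 : 0 < w := Real.sqrt_pos.2 hδ0
    have hwsq : w^2 = δ := Real.sq_sqrt hδ0.le
    have hwhalf : w ≤ 1/2 := by nlinarith
    set N := ⌈4/w⌉₊ with hNdef
    have hN0 : 0 < N := Nat.ceil_pos.2 (by positivity)
    have hN0' : (0:ℝ) < N := by exact_mod_cast hN0
    have hNge : 4/w ≤ (N:ℝ) := Nat.le_ceil _
    set η := w / N with hηdef
    have hη0 : 0 < η := by positivity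
    have hNη : (N:ℝ) * η = w := by
      rw [hηdef]; field_simp
    set B : ℕ → ℝ := fun r =>
      ∑ x : X, massx D x *
        (if ⌊(p x - (r:ℝ)*η)/((N:ℝ)*η)⌋ = ⌊(q x - (r:ℝ)*η)/((N:ℝ)*η)⌋ then (0:ℝ) else 1)
      with hBdef
    have hsumb : ∀ u v : ℝ, ∑ r ∈ Finset.range N,
        (if ⌊(u - (r:ℝ)*η)/((N:ℝ)*η)⌋ = ⌊(v - (r:ℝ)*η)/((N:ℝ)*η)⌋ then (0:ℝ) else 1)
        = (((Finset.range N).filter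
            (fun (r : ℕ) => ⌊(u - (r:ℝ)*η)/((N:ℝ)*η)⌋ ≠ ⌊(v - (r:ℝ)*η)/((N:ℝ)*η)⌋)).card : ℝ) := by
      intro u v
      rw [← Finset.sum_boole]
      refine Finset.sum_congr rfl fun r _ => ?_
      by_cases h : ⌊(u - (r:ℝ)*η)/((N:ℝ)*η)⌋ = ⌊(v - (r:ℝ)*η)/((N:ℝ)*η)⌋ <;> simp [h]
    have hcount : ∀ x : X, ∑ r ∈ Finset.range N,
        (if ⌊(p x - (r:ℝ)*η)/((N:ℝ)*η)⌋ = ⌊(q x - (r:ℝ)*η)/((N:ℝ)*η)⌋ then (0:ℝ) else 1)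
        ≤ |p x - q x|/η + 1 := by
      intro x
      rw [hsumb]
      rcases le_total (p x) (q x) with hle | hle
      · calc (((Finset.range N).filter
            (fun (r : ℕ) => ⌊(p x - (r:ℝ)*η)/((N:ℝ)*η)⌋ ≠ ⌊(q x - (r:ℝ)*η)/((N:ℝ)*η)⌋)).card : ℝ)
            ≤ (q x - p x)/η + 1 := cross_count N hN0 η hη0 _ _ hle
          _ = |p x - q x|/η + 1 := by
            rw [abs_sub_comm, abs_of_nonneg (by linarith)]
      · have hfe : ((Finset.range N).filter
            (fun (r : ℕ) => ⌊(p x - (r:ℝ)*η)/((N:ℝ)*η)⌋ ≠ ⌊(q x - (r:ℝ)*η)/((N:ℝ)*η)⌋))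
            = ((Finset.range N).filter
            (fun (r : ℕ) => ⌊(q x - (r:ℝ)*η)/((N:ℝ)*η)⌋ ≠ ⌊(p x - (r:ℝ)*η)/((N:ℝ)*η)⌋)) := by
          apply Finset.filter_congr
          intro r _
          simp [ne_comm]
        rw [hfe]
        calc (((Finset.range N).filter
            (fun (r : ℕ) => ⌊(q x - (r:ℝ)*η)/((N:ℝ)*η)⌋ ≠ ⌊(p x - (r:ℝ)*η)/((N:ℝ)*η)⌋)).card : ℝ)
            ≤ (p x - q x)/η + 1 := cross_count N hN0 η hη0 _ _ hle
          _ = |p x - q x|/η + 1 := by rw [abs_of_nonneg (by linarith)]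
    have hBavg : ∑ r ∈ Finset.range N, B r ≤ δ/η + 1 := by
      have hsw : ∑ r ∈ Finset.range N, B r
          = ∑ x : X, massx D x * ∑ r ∈ Finset.range N,
            (if ⌊(p x - (r:ℝ)*η)/((N:ℝ)*η)⌋ = ⌊(q x - (r:ℝ)*η)/((N:ℝ)*η)⌋ then (0:ℝ) else 1) := by
        rw [hBdef, Finset.sum_comm]
        exact Finset.sum_congr rfl fun x _ => by rw [Finset.mul_sum]
      rw [hsw]
      calc ∑ x : X, massx D x * ∑ r ∈ Finset.range N,
            (if ⌊(p x - (r:ℝ)*η)/((N:ℝ)*η)⌋ = ⌊(q x - (r:ℝ)*η)/((N:ℝ)*η)⌋ then (0:ℝ) else 1)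
          ≤ ∑ x : X, massx D x * (|p x - q x|/η + 1) :=
            Finset.sum_le_sum fun x _ => mul_le_mul_of_nonneg_left (hcount x) (hm0 x)
        _ = (∑ x : X, massx D x * |p x - q x|)/η + ∑ x : X, massx D x := by
            rw [Finset.sum_div, ← Finset.sum_add_distrib]
            refine Finset.sum_congr rfl fun x _ => ?_
            field_simp
        _ ≤ δ/η + 1 := by
            rw [hmass1]
            have hdd : (∑ x : X, massx D x * |p x - q x|) = distp D p q := rfl
            rw [hdd]
            gcongr
    obtain ⟨r, hrN, hBr⟩ : ∃ r ∈ Finset.range N, B r ≤ (δ/η + 1)/N := by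
      by_contra hcon
      push_neg at hcon
      have hlt : ∑ r ∈ Finset.range N, ((δ/η + 1)/(N:ℝ)) < ∑ r ∈ Finset.range N, B r :=
        Finset.sum_lt_sum_of_nonempty ⟨0, Finset.mem_range.2 hN0⟩ hcon
      rw [Finset.sum_const, Finset.card_range, nsmul_eq_mul] at hlt
      have heq : (N:ℝ) * ((δ/η + 1)/N) = δ/η + 1 := by
        field_simp
      linarith
    have hBrval : B r ≤ δ/w + 1/N := by
      have : (δ/η + 1)/(N:ℝ) = δ/w + 1/N := by
        rw [← hNη]
        field_simp
      linarith [hBr, this ▸ hBr]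
    -- the shift s := r * η
    have hrltN : (r:ℝ) < N := by exact_mod_cast Finset.mem_range.1 hrN
    have hs0 : (0:ℝ) ≤ (r:ℝ) * η := by positivity
    have hsw : (r:ℝ) * η < w := by
      rw [← hNη]
      exact mul_lt_mul_of_pos_right hrltN hη0
    set idx : ℝ → ℕ := fun t => (⌊(t - (r:ℝ)*η)/w⌋ + 1).toNat with hidxdef
    set K := ⌊1/w⌋₊ + 2 with hKdef
    have hfloor_ge : ∀ t : ℝ, 0 ≤ t → -1 ≤ ⌊(t - (r:ℝ)*η)/w⌋ := by
      intro t ht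
      rw [Int.le_floor]
      push_cast
      rw [le_div_iff₀ hw0]
      linarith
    have hfloor_mul : ∀ t : ℝ, (⌊(t - (r:ℝ)*η)/w⌋ : ℝ) * w ≤ t - (r:ℝ)*η ∧
        t - (r:ℝ)*η < ((⌊(t - (r:ℝ)*η)/w⌋ : ℝ) + 1) * w := by
      intro t
      constructor
      · have h9 := Int.floor_le ((t - (r:ℝ)*η)/w)
        calc (⌊(t - (r:ℝ)*η)/w⌋ : ℝ) * w ≤ ((t - (r:ℝ)*η)/w) * w :=
              mul_le_mul_of_nonneg_right h9 hw0.le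
          _ = t - (r:ℝ)*η := by field_simp
      · have h9 := mul_lt_mul_of_pos_right (Int.lt_floor_add_one ((t - (r:ℝ)*η)/w)) hw0
        calc t - (r:ℝ)*η = ((t - (r:ℝ)*η)/w) * w := by field_simp
          _ < ((⌊(t - (r:ℝ)*η)/w⌋ : ℝ) + 1) * w := h9
    have hidx_lt : ∀ t : ℝ, t ∈ Set.Icc (0:ℝ) 1 → idx t < K := by
      intro t ht
      have h1 : ⌊(t - (r:ℝ)*η)/w⌋ ≤ ⌊(1:ℝ)/w⌋ := by
        apply Int.floor_le_floor
        gcongr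
        linarith [ht.2]
      have h2 : ⌊(1:ℝ)/w⌋.toNat = ⌊(1:ℝ)/w⌋₊ := Int.floor_toNat _
      rw [hidxdef, hKdef]
      simp only
      omega
    have hidx_mono : ∀ t t' : ℝ, t ≤ t' → idx t ≤ idx t' := by
      intro t t' h
      have h1 : ⌊(t - (r:ℝ)*η)/w⌋ ≤ ⌊(t' - (r:ℝ)*η)/w⌋ := by
        apply Int.floor_le_floor
        gcongr
      rw [hidxdef]
      simp only
      omega
    have hidx_close : ∀ t t' : ℝ, 0 ≤ t → 0 ≤ t' → idx t = idx t' → |t - t'| ≤ w := by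
      intro t t' ht ht' hii
      have h1 := hfloor_ge t ht
      have h2 := hfloor_ge t' ht'
      have hnn : ⌊(t - (r:ℝ)*η)/w⌋ = ⌊(t' - (r:ℝ)*η)/w⌋ := by
        rw [hidxdef] at hii
        simp only at hii
        omega
      obtain ⟨a1, a2⟩ := hfloor_mul t
      obtain ⟨b1, b2⟩ := hfloor_mul t'
      rw [hnn] at a1 a2
      rw [abs_sub_le_iff]
      constructor <;> linarith
    haveI hKne : Nonempty (Fin K) := ⟨⟨0, by omega⟩⟩
    set I : Fin K → Set ℝ := fun j => {t : ℝ | t ∈ Set.Icc (0:ℝ) 1 ∧ idx t = (j:ℕ)} with hIdef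
    have hpart : IsIntervalPartition K I := by
      refine ⟨?_, ?_, ?_⟩
      · intro j
        refine ⟨fun t1 h1 t2 h2 t ht => ?_⟩
        obtain ⟨⟨h1a, h1b⟩, h1c⟩ := h1
        obtain ⟨⟨h2a, h2b⟩, h2c⟩ := h2
        have hm1 := hidx_mono t1 t ht.1
        have hm2 := hidx_mono t t2 ht.2
        exact ⟨⟨le_trans h1a ht.1, le_trans ht.2 h2b⟩, by omega⟩
      · intro j j' hne
        rw [Set.disjoint_left]
        rintro t ⟨_, h1⟩ ⟨_, h2⟩
        exact hne (Fin.ext (by omega))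
      · ext t
        simp only [Set.mem_iUnion, hIdef, Set.mem_setOf_eq]
        constructor
        · rintro ⟨j, hj, -⟩; exact hj
        · intro ht
          exact ⟨⟨idx t, hidx_lt t ht⟩, ht, rfl⟩
    have hwidth : widthB K I ≤ w := by
      rw [widthB]
      refine ciSup_le fun j => ?_
      refine Metric.diam_le_of_forall_dist_le hw0.le fun t1 h1 t2 h2 => ?_
      rw [Real.dist_eq]
      exact hidx_close t1 t2 h1.1.1 h2.1.1 (h1.2.trans h2.2.symm)
    set jp : X → Fin K := fun x => ⟨idx (p x), hidx_lt _ (hp x)⟩ with hjpdef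
    set jq : X → Fin K := fun x => ⟨idx (q x), hidx_lt _ (hq x)⟩ with hjqdef
    set g : X → ℝ := fun x => D (x, true) - q x * massx D x with hgdef
    have hmemp : ∀ (x : X) (j : Fin K), (p x ∈ I j) ↔ jp x = j := by
      intro x j
      rw [Fin.ext_iff]
      simp only [hIdef, Set.mem_setOf_eq, hjpdef]
      exact ⟨fun h => h.2, fun h => ⟨hp x, h⟩⟩
    have hCEeq : CEB D p K I = ∑ j : Fin K,
        |∑ x : X, if jp x = j then D (x, true) - p x * massx D x else 0| := by
      rw [CEB]
      refine Finset.sum_congr rfl fun j _ => ?_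
      congr 1
      refine Finset.sum_congr rfl fun x _ => ?_
      by_cases h : jp x = j
      · rw [if_pos h, if_pos ((hmemp x j).2 h)]
      · rw [if_neg h, if_neg (fun hc => h ((hmemp x j).1 hc))]
    have hz : ∀ j : Fin K, ∑ x : X, (if jq x = j then g x else 0) = 0 := by
      intro j
      have hcz := calib_sum_zero D q hcal (fun v => idx v = (j:ℕ))
      have heq : (∑ x : X, (if jq x = j then g x else 0))
          = ∑ x : X, (if idx (q x) = (j:ℕ) then D (x, true) - q x * massx D x else 0) := by
        refine Finset.sum_congr rfl fun x _ => ?_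
        by_cases h : jq x = j
        · rw [if_pos h, if_pos (show idx (q x) = (j:ℕ) from Fin.ext_iff.1 h)]
        · rw [if_neg h, if_neg (fun hc => h (Fin.ext hc))]
      rw [heq]
      convert hcz using 3 with x
    have hTj : ∀ j : Fin K,
        |∑ x : X, if jp x = j then D (x, true) - p x * massx D x else 0|
        ≤ (∑ x : X, (if jp x = jq x then (0:ℝ) else
              ((if jp x = j then (1:ℝ) else 0) + (if jq x = j then 1 else 0))) * massx D x)
          + ∑ x : X, (if jp x = j then massx D x * |p x - q x| else 0) := by
      intro j
      have e1 : ∑ x : X, (if jp x = j then D (x, true) - p x * massx D x else 0)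
          = (∑ x : X, ((if jp x = j then g x else 0) - (if jq x = j then g x else 0)))
            + ∑ x : X, (if jp x = j then (q x - p x) * massx D x else 0) := by
        rw [Finset.sum_sub_distrib, hz j, sub_zero, ← Finset.sum_add_distrib]
        refine Finset.sum_congr rfl fun x _ => ?_
        by_cases h : jp x = j
        · simp only [if_pos h, hgdef]; ring
        · simp [h]
      rw [e1]
      calc |(∑ x : X, ((if jp x = j then g x else 0) - (if jq x = j then g x else 0)))
            + ∑ x : X, (if jp x = j then (q x - p x) * massx D x else 0)|
          ≤ |∑ x : X, ((if jp x = j then g x else 0) - (if jq x = j then g x else 0))|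
            + |∑ x : X, (if jp x = j then (q x - p x) * massx D x else 0)| := abs_add_le _ _
        _ ≤ (∑ x : X, |(if jp x = j then g x else 0) - (if jq x = j then g x else 0)|)
            + ∑ x : X, |if jp x = j then (q x - p x) * massx D x else 0| :=
            add_le_add (Finset.abs_sum_le_sum_abs _ _) (Finset.abs_sum_le_sum_abs _ _)
        _ ≤ _ := by
            refine add_le_add (Finset.sum_le_sum fun x _ => ?_)
              (Finset.sum_le_sum fun x _ => ?_)
            · by_cases h : jp x = jq x
              · rw [if_pos h, zero_mul, h, sub_self, abs_zero]
              · rw [if_neg h]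
                by_cases h1 : jp x = j <;> by_cases h2 : jq x = j
                · exact absurd (h1.trans h2.symm) h
                · rw [if_pos h1, if_neg h2, sub_zero, if_pos h1, if_neg h2]
                  have := hgabs x
                  rw [hgdef]
                  simp only
                  linarith [this]
                · rw [if_neg h1, if_pos h2, zero_sub, abs_neg, if_neg h1, if_pos h2]
                  have := hgabs x
                  rw [hgdef]
                  simp only
                  linarith [this]
                · rw [if_neg h1, if_neg h2, sub_zero, abs_zero, if_neg h1, if_neg h2]
                  simp [hm0 x]
            · by_cases h : jp x = j
              · rw [if_pos h, if_pos h, abs_mul, abs_of_nonneg (hm0 x), abs_sub_comm]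
                rw [mul_comm]
              · rw [if_neg h, if_neg h, abs_zero]
    have hCEbound : CEB D p K I ≤ 2 * B r + δ := by
      rw [hCEeq]
      have hsum2 : ∑ j : Fin K, ∑ x : X,
          (if jp x = j then massx D x * |p x - q x| else 0) ≤ δ := by
        rw [Finset.sum_comm]
        have hhx : ∀ x : X, ∑ j : Fin K, (if jp x = j then massx D x * |p x - q x| else 0)
            = massx D x * |p x - q x| := by
          intro x
          rw [Finset.sum_ite_eq]
          simp
        rw [Finset.sum_congr rfl fun x _ => hhx x]
        exact hclose
      have hsum1 : ∑ j : Fin K, ∑ x : X, (if jp x = jq x then (0:ℝ) else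
            ((if jp x = j then (1:ℝ) else 0) + (if jq x = j then 1 else 0))) * massx D x
          ≤ 2 * B r := by
        rw [Finset.sum_comm]
        have hxj : ∀ x : X, ∑ j : Fin K, (if jp x = jq x then (0:ℝ) else
            ((if jp x = j then (1:ℝ) else 0) + (if jq x = j then 1 else 0))) * massx D x
            = (if jp x = jq x then (0:ℝ) else 2) * massx D x := by
          intro x
          by_cases h : jp x = jq x
          · simp [h]
          · simp only [if_neg h]
            rw [← Finset.sum_mul]
            congr 1
            rw [Finset.sum_add_distrib, Finset.sum_ite_eq, Finset.sum_ite_eq]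
            simp
            norm_num
        rw [Finset.sum_congr rfl fun x _ => hxj x]
        rw [hBdef, Finset.mul_sum]
        refine Finset.sum_le_sum fun x _ => ?_
        by_cases hf : ⌊(p x - (r:ℝ)*η)/((N:ℝ)*η)⌋ = ⌊(q x - (r:ℝ)*η)/((N:ℝ)*η)⌋
        · have hjeq : jp x = jq x := by
            apply Fin.ext
            show idx (p x) = idx (q x)
            rw [hidxdef]
            simp only
            rw [hNη] at hf
            omega
          rw [if_pos hjeq, if_pos hf, zero_mul, mul_zero, mul_zero]
        · rw [if_neg hf]
          by_cases hj : jp x = jq x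
          · rw [if_pos hj, zero_mul]
            nlinarith [hm0 x]
          · rw [if_neg hj]
            nlinarith [hm0 x]
      calc ∑ j : Fin K, |∑ x : X, if jp x = j then D (x, true) - p x * massx D x else 0|
          ≤ ∑ j : Fin K, ((∑ x : X, (if jp x = jq x then (0:ℝ) else
              ((if jp x = j then (1:ℝ) else 0) + (if jq x = j then 1 else 0))) * massx D x)
            + ∑ x : X, (if jp x = j then massx D x * |p x - q x| else 0)) :=
            Finset.sum_le_sum fun j _ => hTj j
        _ = (∑ j : Fin K, ∑ x : X, (if jp x = jq x then (0:ℝ) else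
              ((if jp x = j then (1:ℝ) else 0) + (if jq x = j then 1 else 0))) * massx D x)
            + ∑ j : Fin K, ∑ x : X, (if jp x = j then massx D x * |p x - q x| else 0) :=
            Finset.sum_add_distrib
        _ ≤ 2 * B r + δ := add_le_add hsum1 hsum2
    refine ⟨K, I, hpart, ?_⟩
    rw [intCEB]
    have hNw : (4:ℝ) ≤ (N:ℝ) * w := by
      have h9 := (div_le_iff₀ hw0).1 hNge
      linarith
    have h1N : 1/(N:ℝ) ≤ w/4 := by
      rw [div_le_div_iff₀ hN0' (by norm_num : (0:ℝ) < 4)]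
      linarith
    have hδw : δ/w = w := by
      rw [← hwsq, pow_two]
      field_simp
    calc CEB D p K I + widthB K I ≤ (2 * B r + δ) + w := add_le_add hCEbound hwidth
      _ ≤ (2 * (δ/w + 1/(N:ℝ)) + δ) + w := by linarith [hBrval]
      _ = (2 * (w + 1/(N:ℝ)) + δ) + w := by rw [hδw]
      _ ≤ 4 * w := by nlinarith [hwsq, hwhalf, h1N, hw0]
end
end
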